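/- Under the divisive initial condition with ε > 0 and 0 < δ2 ≤ ε/(2n), the first-merging time T̄ = inf{ t : x_i(t) − x_1(t) ≤ ε for all i ∈ V_2 } is almost surely finite, i.e., P{T̄ < ∞} = 1. -/

import Mathlib

/-!
As long as every agent of the cluster `A = V₁` of agent 1 stays more than `ε` below `V₂`, the
other clusters do not move, the noiseless agents of `A` move together, and averaging inside `A`
preserves the sum of its opinions, which therefore changes exactly by the injected noise. The
partial sums of the noise form a submartingale with bounded increments which, by the second
Borel–Cantelli lemma, do not tend to `0`; hence the partial sums are almost surely unbounded
above, and some agent of `A` eventually comes within `ε` of `V₂`. If agent 1 does, we are done.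
Otherwise, in the next step `V₂` averages with the noiseless agents of `A` and ends up within
`ε - ε / n` of them, while agent 1 lies at most `2δ₁ ≤ ε / n` below them.
-/

open MeasureTheory ProbabilityTheory Filter

/-- Neighbor set of agent `i` in the Hegselmann–Krause model with confidence threshold `ε`. -/
noncomputable def hkNbr {n : ℕ} (ε : ℝ) (x : Fin n → ℝ) (i : Fin n) : Finset (Fin n) :=
  Finset.univ.filter fun j => |x j - x i| ≤ ε

/-- Noisy HK update: agent `1` (index `0`) additionally receives the noise `ξ`. -/
noncomputable def hkStep {n : ℕ} (ε : ℝ) (x : Fin n → ℝ) (ξ : ℝ) (i : Fin n) : ℝ :=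
  (∑ j ∈ hkNbr ε x i, x j) / ((hkNbr ε x i).card : ℝ) + (if (i : ℕ) = 0 then ξ else 0)

open scoped Topology ENNReal

namespace MeasureTheory.pdf.IsUniform

variable {Ω E : Type*} {mΩ : MeasurableSpace Ω} [MeasurableSpace E] {P : Measure Ω}
  {μ : Measure E}

lemma ae_mem {X : Ω → E} {s : Set E} (hms : MeasurableSet s) (hns : μ s ≠ 0) (hnt : μ s ≠ ∞)
    (hu : IsUniform X s P μ) : ∀ᵐ ω ∂P, X ω ∈ s := by
  have h := hu.measure_preimage hns hnt hms.compl
  rwa [Set.inter_compl_self, measure_empty, ENNReal.zero_div] at h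

lemma integral_Icc {X : Ω → ℝ} {a b : ℝ} (hab : a < b) (hu : IsUniform X (Set.Icc a b) P) :
    ∫ ω, X ω ∂P = (a + b) / 2 := by
  rw [hu.integral_eq, Real.volume_Icc, ENNReal.toReal_inv, ENNReal.toReal_ofReal (by linarith),
    integral_Icc_eq_integral_Ioc, ← intervalIntegral.integral_of_le hab.le, integral_id]
  field_simp [sub_ne_zero.2 hab.ne']
  ring

lemma measure_preimage_Ici_ne_zero {X : Ω → ℝ} {a b c : ℝ} (hab : a < b) (hcb : c < b)
    (hu : IsUniform X (Set.Icc a b) P) : P (X ⁻¹' Set.Ici c) ≠ 0 := by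
  have hvol : volume (Set.Icc a b) ≠ 0 := by simp [hab]
  rw [hu.measure_preimage hvol measure_Icc_lt_top.ne measurableSet_Ici, ne_eq,
    ENNReal.div_eq_zero_iff, not_or]
  refine ⟨fun h => ?_, measure_Icc_lt_top.ne⟩
  have hsub : Set.Icc (max a c) b ⊆ Set.Icc a b ∩ Set.Ici c := fun y hy =>
    ⟨⟨(le_max_left a c).trans hy.1, hy.2⟩, (le_max_right a c).trans hy.1⟩
  have := measure_mono_null hsub h
  rw [Real.volume_Icc, ENNReal.ofReal_eq_zero, sub_nonpos] at this
  exact (max_lt hab hcb).not_ge this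

end MeasureTheory.pdf.IsUniform

namespace ProbabilityTheory.iIndepFun

variable {Ω β : Type*} {mΩ : MeasurableSpace Ω} [MeasurableSpace β] {P : Measure Ω}

lemma ae_frequently_mem {ξ : ℕ → Ω → β} (hindep : iIndepFun ξ P) (hmeas : ∀ t, Measurable (ξ t))
    {B : Set β} (hB : MeasurableSet B) {p : ℝ≥0∞} (hp : p ≠ 0) (hle : ∀ t, p ≤ P (ξ t ⁻¹' B)) :
    ∀ᵐ ω ∂P, ∃ᶠ t in atTop, ξ t ω ∈ B := by
  have := hindep.isProbabilityMeasure
  have hindepB : iIndepSet (fun t => ξ t ⁻¹' B) P :=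
    (iIndepSet_iff _ _).2 fun S f hf => hindep.meas_biInter fun t ht =>
      MeasurableSpace.generateFrom_le (by rintro _ rfl; exact ⟨B, hB, rfl⟩) _ (hf t ht)
  have hsum : ∑' t, P (ξ t ⁻¹' B) = ∞ :=
    top_unique ((ENNReal.tsum_const_eq_top_of_ne_zero hp).ge.trans (ENNReal.tsum_le_tsum hle))
  have hlimsup := measure_limsup_eq_one (fun t => hmeas t hB) hindepB hsum
  rw [← measure_univ (μ := P), ← ae_mem_iff_measure_eq
    (MeasurableSet.measurableSet_limsup fun t => hmeas t hB).nullMeasurableSet] at hlimsup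
  exact hlimsup.mono fun ω hω => mem_limsup_iff_frequently_mem.1 hω

lemma submartingale_sum_range_succ {ξ : ℕ → Ω → ℝ} (hindep : iIndepFun ξ P)
    (hmeas : ∀ t, StronglyMeasurable (ξ t)) (hint : ∀ t, Integrable (ξ t) P)
    (hmean : ∀ t, 0 ≤ ∫ ω, ξ t ω ∂P) :
    Submartingale (fun t ω => ∑ s ∈ Finset.range (t + 1), ξ s ω) (Filtration.natural ξ hmeas) P := by
  have := hindep.isProbabilityMeasure
  refine submartingale_of_condExp_sub_nonneg_nat (fun t => ?_)
    (fun t => integrable_finsetSum _ fun s _ => hint s) fun t => ?_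
  · refine Finset.stronglyMeasurable_fun_sum _ fun s hs => ?_
    exact (Filtration.stronglyAdapted_natural hmeas s).mono
      (Filtration.mono _ (Finset.mem_range_succ_iff.1 hs))
  · have hinc : (fun ω => ∑ s ∈ Finset.range (t + 1 + 1), ξ s ω) -
        (fun ω => ∑ s ∈ Finset.range (t + 1), ξ s ω) = ξ (t + 1) := by
      ext ω
      simp [Finset.sum_range_succ _ (t + 1)]
    rw [hinc]
    filter_upwards [hindep.condExp_natural_ae_eq_of_lt hmeas t.lt_succ_self] with ω hω
    rw [hω]
    exact hmean (t + 1)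

lemma ae_not_bddAbove_sum_range {ξ : ℕ → Ω → ℝ} (hindep : iIndepFun ξ P)
    (hmeas : ∀ t, Measurable (ξ t)) (hmean : ∀ t, 0 ≤ ∫ ω, ξ t ω ∂P) {R : ℝ}
    (hbdd : ∀ᵐ ω ∂P, ∀ t, |ξ t ω| ≤ R)
    (hlim : ∀ᵐ ω ∂P, ¬ Tendsto (fun t => ξ t ω) atTop (𝓝 0)) :
    ∀ᵐ ω ∂P, ¬ BddAbove (Set.range fun t => ∑ s ∈ Finset.range t, ξ s ω) := by
  have := hindep.isProbabilityMeasure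
  have hsm t := (hmeas t).stronglyMeasurable
  have hint t : Integrable (ξ t) P :=
    .of_bound (hsm t).aestronglyMeasurable R (by simpa using ae_all_iff.1 hbdd t)
  have hinc : ∀ᵐ ω ∂P, ∀ t, |∑ s ∈ Finset.range (t + 1 + 1), ξ s ω -
      ∑ s ∈ Finset.range (t + 1), ξ s ω| ≤ (R.toNNReal : ℝ) := by
    filter_upwards [hbdd] with ω hω t
    simpa [Finset.sum_range_succ _ (t + 1)] using (hω (t + 1)).trans (R.le_coe_toNNReal)
  filter_upwards [(hindep.submartingale_sum_range_succ hsm hint hmean).bddAbove_iff_exists_tendsto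
    hinc, hlim] with ω hiff hω hS
  obtain ⟨c, hc⟩ := hiff.1 (hS.mono (Set.range_subset_iff.2 fun t => Set.mem_range_self (t + 1)))
  refine hω ((tendsto_add_atTop_iff_nat 1).1 ?_)
  simpa [Finset.sum_range_succ _ (_ + 1)] using (hc.comp (tendsto_add_atTop_nat 1)).sub hc

lemma ae_not_bddAbove_sum_range_of_isUniform {ξ : ℕ → Ω → ℝ} (hindep : iIndepFun ξ P)
    (hmeas : ∀ t, Measurable (ξ t)) {a b : ℝ} (hab : a < b) (hmean : 0 ≤ a + b)
    (hU : ∀ t, pdf.IsUniform (ξ t) (Set.Icc a b) P) :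
    ∀ᵐ ω ∂P, ¬ BddAbove (Set.range fun t => ∑ s ∈ Finset.range t, ξ s ω) := by
  have hvol : volume (Set.Icc a b) ≠ 0 := by simpa using hab
  have hmem : ∀ᵐ ω ∂P, ∀ t, ξ t ω ∈ Set.Icc a b :=
    ae_all_iff.2 fun t => (hU t).ae_mem measurableSet_Icc hvol measure_Icc_lt_top.ne
  have hfreq : ∀ᵐ ω ∂P, ∃ᶠ t in atTop, ξ t ω ∈ Set.Ici (b / 2) :=
    hindep.ae_frequently_mem hmeas measurableSet_Ici
      ((hU 0).measure_preimage_Ici_ne_zero hab (by linarith : b / 2 < b)) fun t => by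
        rw [(hU 0).measure_preimage hvol measure_Icc_lt_top.ne measurableSet_Ici,
          (hU t).measure_preimage hvol measure_Icc_lt_top.ne measurableSet_Ici]
  refine hindep.ae_not_bddAbove_sum_range hmeas (fun t => ?_)
    (hmem.mono fun ω h t => abs_le.2 ⟨by linarith [(h t).1], (h t).2⟩)
    (hfreq.mono fun ω h hlim => ?_)
  · rw [(hU t).integral_Icc hab]
    linarith
  · obtain ⟨t, ht, hlt⟩ := (h.and_eventually (hlim.eventually (gt_mem_nhds
      (by linarith : (0 : ℝ) < b / 2)))).exists
    exact not_le.2 hlt ht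

end ProbabilityTheory.iIndepFun

section HKDynamics

open Finset

variable {n : ℕ} {ε : ℝ}

lemma self_mem_hkNbr (hε : 0 ≤ ε) (x : Fin n → ℝ) (i : Fin n) : i ∈ hkNbr ε x i := by
  simp [hkNbr, hε]

lemma hkStep_eq_self (hε : 0 ≤ ε) {x : Fin n → ℝ} {i : Fin n} (ξ : ℝ) (hi : (i : ℕ) ≠ 0)
    (hnbr : ∀ j ∈ hkNbr ε x i, x j = x i) : hkStep ε x ξ i = x i := by
  have hcard : ((hkNbr ε x i).card : ℝ) ≠ 0 :=
    Nat.cast_ne_zero.2 (card_ne_zero_of_mem (self_mem_hkNbr hε x i))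
  rw [hkStep, sum_congr rfl hnbr, sum_const, nsmul_eq_mul, if_neg hi, add_zero,
    mul_div_cancel_left₀ _ hcard]

/-- An agent of `V₂` averages its `M` cluster mates at `z` with the `K - 1` noiseless agents of
`A` at `y`, while agent 1 moves from `y + d` to `y + d / K + ξ`. -/
lemma merge_gap_le {M K N y z d ξ ε δ : ℝ} (hK : 2 ≤ K) (hM : 0 ≤ M) (hMK : M + K ≤ N)
    (hzy : z - y ≤ ε) (hd : -δ ≤ d) (hξ : -δ ≤ ξ) (hδ : 0 ≤ δ) (hNδ : 2 * N * δ ≤ ε) :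
    (M * z + (K - 1) * y) / (M + K - 1) - (y + d / K + ξ) ≤ ε := by
  have hden : 0 < M + K - 1 := by linarith
  have hε : 0 ≤ ε := le_trans (by nlinarith) hNδ
  have hdK : -δ ≤ d / K := by
    rw [le_div_iff₀ (by linarith)]
    nlinarith
  have hmain : M * z + (K - 1) * y ≤ (y + ε - 2 * δ) * (M + K - 1) := by
    nlinarith
  have := (div_le_iff₀ hden).2 hmain
  linarith

/-- The state before any agent of the cluster `A` of the noisy agent `i0` has come within `ε` of
another cluster; `d` is the last noise received by `i0`. -/
def IsDriftConfig (A : Finset (Fin n)) (i0 : Fin n) (x₀ x : Fin n → ℝ) (y d : ℝ) : Prop :=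
  (∀ j ∈ A, x j = y + if j = i0 then d else 0) ∧ ∀ j ∉ A, x j = x₀ j

namespace IsDriftConfig

variable {A : Finset (Fin n)} {i0 : Fin n} {x₀ x : Fin n → ℝ} {y d z : ℝ}

lemma sum_eq (hx : IsDriftConfig A i0 x₀ x y d) (hi0 : i0 ∈ A) :
    ∑ j ∈ A, x j = #A * y + d := by
  rw [sum_congr rfl hx.1, sum_add_distrib, sum_const, nsmul_eq_mul, sum_ite_eq', if_pos hi0]

lemma hkNbr_eq (hx : IsDriftConfig A i0 x₀ x y d) (hrest : ∀ j ∉ A, z ≤ x₀ j) (hd : |d| ≤ ε)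
    {j : Fin n} (hj : j ∈ A) (hjz : x j < z - ε) : hkNbr ε x j = A := by
  ext k
  simp only [hkNbr, mem_filter, mem_univ, true_and]
  by_cases hk : k ∈ A
  · simp only [hk, iff_true, hx.1 k hk, hx.1 j hj, add_sub_add_left_eq_sub]
    have hε : 0 ≤ ε := (abs_nonneg d).trans hd
    split_ifs <;> simp [hd, hε]
  · simp only [hk, iff_false, not_le, hx.2 k hk]
    exact lt_of_lt_of_le (by linarith [hrest k hk]) (le_abs_self _)

lemma hkStep_of_mem (hx : IsDriftConfig A i0 x₀ x y d) (hi0 : i0 ∈ A) (hi0z : (i0 : ℕ) = 0)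
    (hrest : ∀ j ∉ A, z ≤ x₀ j) (hd : |d| ≤ ε) {j : Fin n} (hj : j ∈ A) (hjz : x j < z - ε)
    (ξ : ℝ) : hkStep ε x ξ j = y + d / #A + if j = i0 then ξ else 0 := by
  have hK : (#A : ℝ) ≠ 0 := Nat.cast_ne_zero.2 (card_ne_zero_of_mem hi0)
  rw [hkStep, hx.hkNbr_eq hrest hd hj hjz, hx.sum_eq hi0, add_div, mul_div_cancel_left₀ _ hK]
  simp only [Fin.ext_iff, hi0z]

lemma hkStep_of_not_mem (hx : IsDriftConfig A i0 x₀ x y d) (hi0 : i0 ∈ A)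
    (hi0z : (i0 : ℕ) = 0) (hε : 0 ≤ ε) (hsep : ∀ j ∉ A, ∀ k ∉ A, |x₀ k - x₀ j| ≤ ε → x₀ k = x₀ j)
    (hrest : ∀ j ∉ A, z ≤ x₀ j) (hfree : ∀ k ∈ A, x k < z - ε) {j : Fin n} (hj : j ∉ A)
    (ξ : ℝ) : hkStep ε x ξ j = x₀ j := by
  rw [← hx.2 j hj]
  refine hkStep_eq_self hε ξ (fun h => hj (Fin.ext (h.trans hi0z.symm) ▸ hi0)) fun k hk => ?_
  simp only [hkNbr, mem_filter, mem_univ, true_and, hx.2 j hj] at hk ⊢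
  have hkA : k ∉ A := fun hkA => by
    linarith [hfree k hkA, hrest j hj, neg_abs_le (x k - x₀ j)]
  rw [hx.2 k hkA] at hk ⊢
  exact hsep j hj k hkA hk

lemma step (hx : IsDriftConfig A i0 x₀ x y d) (hi0 : i0 ∈ A) (hi0z : (i0 : ℕ) = 0)
    (hsep : ∀ j ∉ A, ∀ k ∉ A, |x₀ k - x₀ j| ≤ ε → x₀ k = x₀ j) (hrest : ∀ j ∉ A, z ≤ x₀ j)
    (hd : |d| ≤ ε) (hfree : ∀ k ∈ A, x k < z - ε) (ξ : ℝ) :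
    IsDriftConfig A i0 x₀ (hkStep ε x ξ) (y + d / #A) ξ :=
  ⟨fun j hj => hx.hkStep_of_mem hi0 hi0z hrest hd hj (hfree j hj) ξ,
    fun _ hj => hx.hkStep_of_not_mem hi0 hi0z ((abs_nonneg d).trans hd) hsep hrest hfree hj ξ⟩

lemma hkNbr_eq_union (hx : IsDriftConfig A i0 x₀ x y d)
    (hsep : ∀ j ∉ A, ∀ k ∉ A, |x₀ k - x₀ j| ≤ ε → x₀ k = x₀ j) (hi0lt : x i0 < z - ε)
    (hy : |y - z| ≤ ε) {i : Fin n} (hi : i ∉ A) (hiz : x₀ i = z) :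
    hkNbr ε x i = ({k | k ∉ A ∧ x₀ k = z} : Finset (Fin n)) ∪ A.erase i0 := by
  ext k
  simp only [hkNbr, mem_filter, mem_univ, true_and, mem_union, mem_erase, hx.2 i hi, hiz]
  by_cases hkA : k ∈ A
  · by_cases hk : k = i0
    · subst hk
      simp only [hkA, not_true_eq_false, false_and, ne_eq, or_false, iff_false, not_le]
      rw [abs_sub_comm]
      exact lt_of_lt_of_le (by linarith) (le_abs_self _)
    · simp [hkA, hk, hx.1 k hkA, hy]
  · rw [hx.2 k hkA]
    constructor
    · exact fun h => Or.inl ⟨hkA, hiz ▸ hsep i hi k hkA (hiz ▸ h)⟩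
    · rintro (⟨-, hkz⟩ | ⟨-, hk⟩)
      · simpa [hkz] using (abs_nonneg _).trans hy
      · exact absurd hk hkA

lemma hkStep_of_not_mem_of_near (hx : IsDriftConfig A i0 x₀ x y d) (hi0 : i0 ∈ A)
    (hi0z : (i0 : ℕ) = 0) (hsep : ∀ j ∉ A, ∀ k ∉ A, |x₀ k - x₀ j| ≤ ε → x₀ k = x₀ j)
    (hi0lt : x i0 < z - ε) (hy : |y - z| ≤ ε) {i : Fin n} (hi : i ∉ A) (hiz : x₀ i = z)
    (ξ : ℝ) : hkStep ε x ξ i = (#({k | k ∉ A ∧ x₀ k = z} : Finset (Fin n)) * z + (#A - 1) * y) /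
      (#({k | k ∉ A ∧ x₀ k = z} : Finset (Fin n)) + #A - 1) := by
  set C : Finset (Fin n) := {k | k ∉ A ∧ x₀ k = z}
  have hyA : ∀ k ∈ A.erase i0, x k = y := fun k hk => by
    simp [hx.1 k (mem_of_mem_erase hk), ne_of_mem_erase hk]
  have hzC : ∀ k ∈ C, x k = z := fun k hk =>
    (hx.2 k (mem_filter.1 hk).2.1).trans (mem_filter.1 hk).2.2
  have hCA : Disjoint C (A.erase i0) :=
    disjoint_left.2 fun k hk hkA => (mem_filter.1 hk).2.1 (mem_of_mem_erase hkA)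
  have hA1 : ((#A - 1 : ℕ) : ℝ) = #A - 1 := Nat.cast_pred (card_pos.2 ⟨i0, hi0⟩)
  have hi' : (i : ℕ) ≠ 0 := fun h => hi (Fin.ext (h.trans hi0z.symm) ▸ hi0)
  rw [hkStep, hx.hkNbr_eq_union hsep hi0lt hy hi hiz, sum_union hCA, sum_congr rfl hzC,
    sum_congr rfl hyA, sum_const, sum_const, card_union_of_disjoint hCA, card_erase_of_mem hi0,
    nsmul_eq_mul, nsmul_eq_mul, Nat.cast_add, hA1, if_neg hi', add_zero, add_sub_assoc]

lemma hkStep_sub_le (hx : IsDriftConfig A i0 x₀ x y d) (hi0 : i0 ∈ A) (hi0z : (i0 : ℕ) = 0)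
    (hsep : ∀ j ∉ A, ∀ k ∉ A, |x₀ k - x₀ j| ≤ ε → x₀ k = x₀ j) (hrest : ∀ j ∉ A, z ≤ x₀ j)
    {δ : ℝ} (hδ : 0 ≤ δ) (hnδ : 2 * n * δ ≤ ε) (hd : d ∈ Set.Icc (-δ) ε)
    (hi0lt : x i0 < z - ε) {j : Fin n} (hj : j ∈ A.erase i0) (hjz : z - ε ≤ x j)
    {i : Fin n} (hi : i ∉ A) (hiz : x₀ i = z) {ξ : ℝ} (hξ : -δ ≤ ξ) :
    hkStep ε x ξ i - hkStep ε x ξ i0 ≤ ε := by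
  have hδε : δ ≤ ε := by
    have : (1 : ℝ) ≤ n := Nat.one_le_cast.2 i0.pos
    nlinarith
  have hxi0 : x i0 = y + d := by simp [hx.1 i0 hi0]
  have hxj : x j = y := by simp [hx.1 j (mem_of_mem_erase hj), ne_of_mem_erase hj]
  have hK : 2 ≤ #A := by
    have := card_erase_of_mem hi0 ▸ card_pos.2 ⟨j, hj⟩
    omega
  have hCA : Disjoint ({k | k ∉ A ∧ x₀ k = z} : Finset (Fin n)) A :=
    disjoint_left.2 fun k hk => (mem_filter.1 hk).2.1
  have hCn : #({k | k ∉ A ∧ x₀ k = z} : Finset (Fin n)) + #A ≤ n :=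
    card_union_of_disjoint hCA ▸ (card_le_univ _).trans_eq (Fintype.card_fin n)
  rw [hx.hkStep_of_not_mem_of_near hi0 hi0z hsep hi0lt
      (abs_le.2 ⟨by linarith, by linarith [hd.1]⟩) hi hiz,
    hx.hkStep_of_mem hi0 hi0z hrest (abs_le.2 ⟨by linarith [hd.1], hd.2⟩) hi0 hi0lt, if_pos rfl]
  exact merge_gap_le (by exact_mod_cast hK) (Nat.cast_nonneg _) (by exact_mod_cast hCn)
    (by linarith) hd.1 hξ hδ hnδ

end IsDriftConfig

section Trajectory

variable {A : Finset (Fin n)} {i0 : Fin n} {x : ℕ → Fin n → ℝ} {u : ℕ → ℝ} {δ w z : ℝ}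

/-- Averaging inside `A` preserves `∑ j ∈ A, x t j`, so only the noise changes it. -/
lemma isDriftConfig_of_forall_lt (hupd : ∀ t, x (t + 1) = hkStep ε (x t) (u t))
    (hu : ∀ t, u t ∈ Set.Icc (-δ) ε) (hδ : 0 ≤ δ) (hδε : δ ≤ ε) (hi0 : i0 ∈ A)
    (hi0z : (i0 : ℕ) = 0) (hsep : ∀ j ∉ A, ∀ k ∉ A, |x 0 k - x 0 j| ≤ ε → x 0 k = x 0 j)
    (hrest : ∀ j ∉ A, z ≤ x 0 j) (hxA : ∀ j ∈ A, x 0 j = w) :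
    ∀ t, (∀ s < t, ∀ j ∈ A, x s j < z - ε) → ∃ y d, IsDriftConfig A i0 (x 0) (x t) y d ∧
      d ∈ Set.Icc (-δ) ε ∧ #A * y + d = #A * w + ∑ s ∈ range t, u s
  | 0, _ => ⟨w, 0, ⟨fun j hj => by simp [hxA j hj], fun _ _ => rfl⟩, ⟨by linarith, by linarith⟩,
      by simp⟩
  | t + 1, hfree => by
    obtain ⟨y, d, hx, hd, hsum⟩ :=
      isDriftConfig_of_forall_lt hupd hu hδ hδε hi0 hi0z hsep hrest hxA t
        fun s hs => hfree s (Nat.lt_succ_of_lt hs)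
    have hK : (#A : ℝ) ≠ 0 := Nat.cast_ne_zero.2 (card_ne_zero_of_mem hi0)
    refine ⟨y + d / #A, u t, hupd t ▸ hx.step hi0 hi0z hsep hrest
      (abs_le.2 ⟨by linarith [hd.1], hd.2⟩) (hfree t t.lt_succ_self) (u t), hu t, ?_⟩
    rw [sum_range_succ, mul_add, mul_div_cancel₀ _ hK]
    linarith

theorem exists_merge_of_not_bddAbove (hupd : ∀ t, x (t + 1) = hkStep ε (x t) (u t))
    (hu : ∀ t, u t ∈ Set.Icc (-δ) ε) (hS : ¬ BddAbove (Set.range fun t => ∑ s ∈ range t, u s))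
    (hδ : 0 ≤ δ) (hnδ : 2 * n * δ ≤ ε) (hi0 : i0 ∈ A) (hi0z : (i0 : ℕ) = 0)
    (hsep : ∀ j ∉ A, ∀ k ∉ A, |x 0 k - x 0 j| ≤ ε → x 0 k = x 0 j)
    (hrest : ∀ j ∉ A, z ≤ x 0 j) (hxA : ∀ j ∈ A, x 0 j = w) :
    ∃ t, ∀ i ∉ A, x 0 i = z → x t i - x t i0 ≤ ε := by
  have hδε : δ ≤ ε := by
    have : (1 : ℝ) ≤ n := Nat.one_le_cast.2 i0.pos
    nlinarith
  have hdrift := isDriftConfig_of_forall_lt hupd hu hδ hδε hi0 hi0z hsep hrest hxA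
  have hexit : ∃ t, ∃ j ∈ A, z - ε ≤ x t j := by
    by_contra! hfree
    refine hS ⟨#A * (z - ε - w), ?_⟩
    rintro _ ⟨t, rfl⟩
    obtain ⟨y, d, hx, -, hsum⟩ := hdrift t fun s _ => hfree s
    have hlt : ∑ j ∈ A, x t j < ∑ _j ∈ A, (z - ε) := sum_lt_sum_of_nonempty ⟨i0, hi0⟩ (hfree t)
    rw [hx.sum_eq hi0, sum_const, nsmul_eq_mul] at hlt
    linarith
  classical
  obtain ⟨j, hj, hjz⟩ := Nat.find_spec hexit
  obtain ⟨y, d, hx, hd, -⟩ := hdrift (Nat.find hexit) fun s hs k hk =>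
    not_le.1 fun h => Nat.find_min hexit hs ⟨k, hk, h⟩
  by_cases hi0lt : z - ε ≤ x (Nat.find hexit) i0
  · exact ⟨Nat.find hexit, fun i hi hiz => by rw [hx.2 i hi, hiz]; linarith⟩
  · have hji : j ≠ i0 := by rintro rfl; exact hi0lt hjz
    refine ⟨Nat.find hexit + 1, fun i hi hiz => ?_⟩
    rw [hupd]
    exact hx.hkStep_sub_le hi0 hi0z hsep hrest hδ hnδ hd (not_le.1 hi0lt) (mem_erase.2 ⟨hji, hj⟩)
      hjz hi hiz (hu _).1

end Trajectory

end HKDynamics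

section Clusters

variable {n Nc : ℕ} {ε : ℝ} {Vg : Fin Nc → Finset (Fin n)} {xs : Fin Nc → ℝ} {x₀ : Fin n → ℝ}

lemma eq_of_abs_sub_le_of_clusters (hVcover : Finset.univ.biUnion Vg = Finset.univ)
    (hgap : ∀ q p : Fin Nc, q < p → ε < xs p - xs q) (hx₀ : ∀ g, ∀ i ∈ Vg g, x₀ i = xs g)
    {j k : Fin n} (hjk : |x₀ k - x₀ j| ≤ ε) : x₀ k = x₀ j := by
  obtain ⟨g, -, hg⟩ := Finset.mem_biUnion.1 (hVcover.ge (Finset.mem_univ j))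
  obtain ⟨h, -, hh⟩ := Finset.mem_biUnion.1 (hVcover.ge (Finset.mem_univ k))
  rw [hx₀ g j hg, hx₀ h k hh] at hjk ⊢
  rcases lt_trichotomy g h with hlt | rfl | hlt
  · linarith [hgap g h hlt, le_abs_self (xs h - xs g)]
  · rfl
  · linarith [hgap h g hlt, neg_abs_le (xs h - xs g)]

lemma le_of_notMem_cluster_zero (hε : 0 ≤ ε) (hVcover : Finset.univ.biUnion Vg = Finset.univ)
    (hgap : ∀ q p : Fin Nc, q < p → ε < xs p - xs q) (hx₀ : ∀ g, ∀ i ∈ Vg g, x₀ i = xs g)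
    (h0 : 0 < Nc) (h1 : 1 < Nc) {j : Fin n} (hj : j ∉ Vg ⟨0, h0⟩) : xs ⟨1, h1⟩ ≤ x₀ j := by
  obtain ⟨g, -, hg⟩ := Finset.mem_biUnion.1 (hVcover.ge (Finset.mem_univ j))
  have hmono : StrictMono xs := fun q p hqp => by linarith [hgap q p hqp]
  rw [hx₀ g j hg]
  refine hmono.monotone (Fin.le_def.2 (Nat.one_le_iff_ne_zero.2 fun hg0 => hj ?_))
  rwa [show g = ⟨0, h0⟩ from Fin.ext hg0] at hg

end Clusters

/-- Under the divisive initial condition, the first-merging time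
`T̄ = inf { t : x_i(t) - x_1(t) ≤ ε for all i ∈ V₂ }` is almost surely finite. -/
theorem hk_first_merging_time_finite
    {Ω : Type*} [MeasurableSpace Ω] (P : Measure Ω) [IsProbabilityMeasure P]
    (n : ℕ) (hn : 2 ≤ n) (ε δ1 δ2 : ℝ) (hε : 0 < ε)
    (hδ1 : 0 ≤ δ1) (hδ12 : δ1 ≤ δ2) (hδ2pos : 0 < δ2) (hδ2 : δ2 ≤ ε / (2 * n))
    -- noise: `ξ t` is the noise injected at the update from time `t` to `t+1`
    (ξ : ℕ → Ω → ℝ) (hξmeas : ∀ t, Measurable (ξ t))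
    (hindep : iIndepFun ξ P)
    (hunif : ∀ t, Measure.map (ξ t) P
      = (ENNReal.ofReal (δ1 + δ2))⁻¹ • volume.restrict (Set.Icc (-δ1) δ2))
    -- divisive initial condition
    (Nc : ℕ) (hNc2 : 2 ≤ Nc)
    (Vg : Fin Nc → Finset (Fin n))
    (hVdisj : ∀ g h : Fin Nc, g ≠ h → Disjoint (Vg g) (Vg h))
    (hVcover : Finset.univ.biUnion Vg = (Finset.univ : Finset (Fin n)))
    (xs : Fin Nc → ℝ)
    (hgap : ∀ q p : Fin Nc, q < p → ε < xs p - xs q)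
    (hagent1 : (⟨0, by omega⟩ : Fin n) ∈ Vg ⟨0, by omega⟩)
    -- trajectory
    (x : Ω → ℕ → Fin n → ℝ)
    (hx0 : ∀ ω, ∀ g : Fin Nc, ∀ i ∈ Vg g, x ω 0 i = xs g)
    (hupd : ∀ ω t i, x ω (t + 1) i = hkStep ε (x ω t) (ξ t ω) i) :
    P {ω | ∃ t : ℕ, ∀ i ∈ Vg ⟨1, by omega⟩,
        x ω t i - x ω t ⟨0, by omega⟩ ≤ ε} = 1 := by
  have hlt : -δ1 < δ2 := by linarith
  have hU t : pdf.IsUniform (ξ t) (Set.Icc (-δ1) δ2) P := by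
    rw [pdf.IsUniform, ProbabilityTheory.cond, hunif t, Real.volume_Icc, sub_neg_eq_add, add_comm]
  have hmem : ∀ᵐ ω ∂P, ∀ t, ξ t ω ∈ Set.Icc (-δ1) δ2 := ae_all_iff.2 fun t =>
    (hU t).ae_mem measurableSet_Icc (by simp; linarith) measure_Icc_lt_top.ne
  have hnδ2 : 2 * n * δ2 ≤ ε := by
    rw [mul_comm]
    exact (le_div_iff₀ (by positivity)).1 hδ2
  have hδ2ε : δ2 ≤ ε := by
    have : (2 : ℝ) ≤ n := by exact_mod_cast hn
    nlinarith
  refine (measure_congr (eventuallyEq_univ.2 ?_)).trans measure_univ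
  filter_upwards [hmem, hindep.ae_not_bddAbove_sum_range_of_isUniform hξmeas hlt (by linarith) hU]
    with ω hω hS
  obtain ⟨t, ht⟩ := exists_merge_of_not_bddAbove (x := x ω) (u := fun t => ξ t ω)
    (fun t => funext (hupd ω t)) (fun t => ⟨(hω t).1, (hω t).2.trans hδ2ε⟩) hS
    hδ1 (hnδ2.trans' (by gcongr)) hagent1 rfl
    (fun _ _ _ _ => eq_of_abs_sub_le_of_clusters hVcover hgap (hx0 ω))
    (fun _ => le_of_notMem_cluster_zero hε.le hVcover hgap (hx0 ω) _ _) (hx0 ω _)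
  exact ⟨t, fun i hi => ht i (Finset.disjoint_right.1 (hVdisj _ _ (by simp [Fin.ext_iff])) hi)
    (hx0 ω _ i hi)⟩
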